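/- (Theorem 2, from Lemma 3) Under the hypotheses of Lemma 3 (C nonempty compact, h ∈ C¹, L_f h > 0 on ∂C = {h = 0}), the function B = 1/h: Int(C) → ℝ satisfies L_f B(x) ≤ γ₁ h(x) = γ₁ / B(x) on Int(C) for some γ₁ > 0, and h satisfies L_f h(x) ≥ −γ₂ h(x) on Int(C) for some γ₂ > 0. -/

import Mathlib

/-!
On the compact set `K = {h ≥ 0, g ≤ 0}` the function `h` is positive, since `g > 0` where
`h = 0`; hence `g / h ^ k` is continuous on `K` and bounded below, which gives
`g ≥ -γ h ^ k` on `K`, while off `K` the bound holds because `g > 0`. Applied to the Lie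
derivative `g = L_f h` with `k = 1` this is the bound on `h`, and with `k = 3` it bounds
`L_f (1 / h) = -L_f h / h ^ 2` by `γ h`.
-/

theorem exists_neg_mul_pow_le_of_pos_of_eq_zero {X : Type*} [TopologicalSpace X] {g h : X → ℝ}
    (hg : Continuous g) (hh : Continuous h) (hcomp : IsCompact {x | 0 ≤ h x})
    (hpos : ∀ x, h x = 0 → 0 < g x) (k : ℕ) :
    ∃ γ : ℝ, 0 < γ ∧ ∀ x, 0 < h x → -γ * h x ^ k ≤ g x := by
  set K := {x | 0 ≤ h x} ∩ {x | g x ≤ 0}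
  have hK : IsCompact K :=
    hcomp.inter_right (isClosed_le hg continuous_const)
  have h_pos_on_K : ∀ x ∈ K, 0 < h x := fun x ⟨hx, hgx⟩ =>
    hx.lt_of_ne fun h0 => (hpos x h0.symm).not_ge hgx
  have hcont : ContinuousOn (fun x => g x / h x ^ k) K :=
    hg.continuousOn.div (hh.continuousOn.pow k) fun x hx => (pow_pos (h_pos_on_K x hx) k).ne'
  obtain ⟨c, hc⟩ := hK.bddBelow_image hcont
  refine ⟨|c| + 1, by positivity, fun x hx => ?_⟩
  have hxk : 0 < h x ^ k := pow_pos hx k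
  by_cases hgx : g x ≤ 0
  · have hcx : c ≤ g x / h x ^ k := hc ⟨x, ⟨hx.le, hgx⟩, rfl⟩
    rw [le_div_iff₀ hxk] at hcx
    nlinarith [neg_abs_le c]
  · nlinarith [abs_nonneg c]

theorem fderiv_fun_inv_apply {𝕜 E : Type*} [NontriviallyNormedField 𝕜] [NormedAddCommGroup E]
    [NormedSpace 𝕜 E] {h : E → 𝕜} {x : E} (hd : DifferentiableAt 𝕜 h x) (hx : h x ≠ 0) (v : E) :
    fderiv 𝕜 (fun y => (h y)⁻¹) x v = -fderiv 𝕜 h x v / h x ^ 2 := by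
  have hinv : HasFDerivAt (fun y => (h y)⁻¹) _ x := (hasFDerivAt_inv hx).comp x hd.hasFDerivAt
  rw [hinv.fderiv]
  simp [div_eq_mul_inv]

theorem stmt14_general (n : ℕ) (f : (Fin n → ℝ) → (Fin n → ℝ)) (hf : LocallyLipschitz f)
    (h : (Fin n → ℝ) → ℝ) (hh : ContDiff ℝ 1 h)
    (hcomp : IsCompact {x | 0 ≤ h x})
    (hbdry : ∀ x, h x = 0 → 0 < fderiv ℝ h x (f x)) :
    (∃ γ₁ : ℝ, 0 < γ₁ ∧ ∀ x, 0 < h x →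
      fderiv ℝ (fun y => (h y)⁻¹) x (f x) ≤ γ₁ * h x) ∧
    (∃ γ₂ : ℝ, 0 < γ₂ ∧ ∀ x, 0 < h x →
      fderiv ℝ h x (f x) ≥ -γ₂ * h x) := by
  have hLie : Continuous fun x => fderiv ℝ h x (f x) :=
    (hh.continuous_fderiv one_ne_zero).clm_apply hf.continuous
  obtain ⟨γ₁, hγ₁, hbound₃⟩ :=
    exists_neg_mul_pow_le_of_pos_of_eq_zero hLie hh.continuous hcomp hbdry 3
  obtain ⟨γ₂, hγ₂, hbound₁⟩ :=
    exists_neg_mul_pow_le_of_pos_of_eq_zero hLie hh.continuous hcomp hbdry 1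
  refine ⟨⟨γ₁, hγ₁, fun x hx => ?_⟩, ⟨γ₂, hγ₂, fun x hx => by simpa using hbound₁ x hx⟩⟩
  calc fderiv ℝ (fun y => (h y)⁻¹) x (f x)
      = -fderiv ℝ h x (f x) / h x ^ 2 :=
        fderiv_fun_inv_apply (hh.differentiable one_ne_zero x) hx.ne' (f x)
    _ ≤ γ₁ * h x ^ 3 / h x ^ 2 := by gcongr; linarith [hbound₃ x hx]
    _ = γ₁ * h x := by field_simp

/-- Theorem 2: under the hypotheses of Lemma 3, B = 1/h satisfies
L_f B ≤ γ₁ h = γ₁/B on Int(C), and h satisfies L_f h ≥ −γ₂ h on Int(C). -/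
theorem stmt14 (n : ℕ) (f : (Fin n → ℝ) → (Fin n → ℝ)) (hf : LocallyLipschitz f)
    (h : (Fin n → ℝ) → ℝ) (hh : ContDiff ℝ 1 h)
    (hne : {x | 0 ≤ h x}.Nonempty) (hcomp : IsCompact {x | 0 ≤ h x})
    (hcl : {x | 0 ≤ h x} = closure {x | 0 < h x})
    (hbdry : ∀ x, h x = 0 → 0 < fderiv ℝ h x (f x)) :
    (∃ γ₁ : ℝ, 0 < γ₁ ∧ ∀ x, 0 < h x →
      fderiv ℝ (fun y => (h y)⁻¹) x (f x) ≤ γ₁ * h x) ∧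
    (∃ γ₂ : ℝ, 0 < γ₂ ∧ ∀ x, 0 < h x →
      fderiv ℝ h x (f x) ≥ -γ₂ * h x) :=
  stmt14_general n f hf h hh hcomp hbdry
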